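/- Let k be an algebraically closed field of characteristic zero and let R = k[x,y] be the polynomial ring in two variables, equipped with a Poisson bracket satisfying {x,y} = xy. Then the Poisson-primitive ideals of R are exactly the maximal ideals ⟨x − α, y⟩ for α ∈ k, the maximal ideals ⟨x, y − β⟩ for β ∈ k, and the zero ideal. In particular, for α, β ∈ k both nonzero, the Poisson core of the maximal ideal ⟨x − α, y − β⟩ is the zero ideal, and neither ⟨x⟩ nor ⟨y⟩ is Poisson-primitive. -/

import Mathlib

/-- A Poisson bracket on a commutative `k`-algebra `R`: a `k`-bilinear,
antisymmetric map satisfying the Jacobi and Leibniz identities. -/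
structure PoissonBracket (k : Type*) (R : Type*) [CommRing k] [CommRing R] [Algebra k R] where
  bracket : R → R → R
  add_left : ∀ a b c : R, bracket (a + b) c = bracket a c + bracket b c
  add_right : ∀ a b c : R, bracket a (b + c) = bracket a b + bracket a c
  smul_left : ∀ (t : k) (a b : R), bracket (t • a) b = t • bracket a b
  smul_right : ∀ (t : k) (a b : R), bracket a (t • b) = t • bracket a b
  antisymm : ∀ a b : R, bracket a b = - bracket b a
  jacobi : ∀ a b c : R,
    bracket a (bracket b c) + bracket b (bracket c a) + bracket c (bracket a b) = 0
  leibniz : ∀ a b c : R, bracket a (b * c) = bracket a b * c + b * bracket a c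

/-- An ideal `I` is a Poisson ideal if `{R, I} ⊆ I`. -/
def IsPoissonIdeal {k R : Type*} [CommRing k] [CommRing R] [Algebra k R]
    (B : PoissonBracket k R) (I : Ideal R) : Prop :=
  ∀ a : R, ∀ x ∈ I, B.bracket a x ∈ I

/-- The Poisson core of an ideal `J`: the largest Poisson ideal contained in `J`,
i.e. the sum of all Poisson ideals contained in `J`. -/
def poissonCore {k R : Type*} [CommRing k] [CommRing R] [Algebra k R]
    (B : PoissonBracket k R) (J : Ideal R) : Ideal R :=
  sSup {I : Ideal R | IsPoissonIdeal B I ∧ I ≤ J}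

/-- A Poisson-primitive ideal: the Poisson core of some maximal ideal. -/
def IsPoissonPrimitive {k R : Type*} [CommRing k] [CommRing R] [Algebra k R]
    (B : PoissonBracket k R) (P : Ideal R) : Prop :=
  ∃ m : Ideal R, m.IsMaximal ∧ poissonCore B m = P

/-!
Here `{a, f} = xy (∂ₓa ∂ᵧf - ∂ᵧa ∂ₓf)`, so the bracket takes values in `(xy)`: every ideal
containing `xy`, such as `(x - α, y)` or `(x, y - β)`, is Poisson and is its own core.
If `αβ ≠ 0` and `I ⊆ (x - α, y - β)` is Poisson, then, since `{f, y} = xy ∂ₓf` and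
`{x, f} = xy ∂ᵧf`, the saturation `{f | (xy)ⁿ f ∈ I for some n}` is stable under `∂ₓ` and `∂ᵧ`,
and it still vanishes at `(α, β)`. In characteristic zero a set of polynomials that is stable
under all partial derivatives and vanishes at a point is zero (Taylor expansion), so `I = 0`.
The Nullstellensatz makes every maximal ideal of the form `(x - α, y - β)`.
-/

open MvPolynomial

namespace Derivation

variable {R A : Type*} [CommSemiring R] [CommRing A] [Algebra R A]

lemma pow_succ_mul_apply (D : Derivation R A A) (s f : A) (n : ℕ) :
    s ^ (n + 1) * D f = s * D (s ^ n * f) - n * D s * (s ^ n * f) := by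
  induction n with
  | zero => simp
  | succ n ih =>
    have h : D (s ^ (n + 1) * f) = s * D (s ^ n * f) + s ^ n * f * D s := by
      rw [pow_succ', mul_assoc, D.leibniz, smul_eq_mul, smul_eq_mul]
    rw [h]
    push_cast
    linear_combination s * ih

end Derivation

namespace MvPolynomial

variable {σ R : Type*}

lemma derivation_apply_mem_of_forall_X_mem [CommRing R]
    (D : Derivation R (MvPolynomial σ R) (MvPolynomial σ R)) {J : Ideal (MvPolynomial σ R)}
    (h : ∀ i, D (X i) ∈ J) (f : MvPolynomial σ R) : D f ∈ J := by
  have hD : J.mkQ.compDer D = 0 :=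
    derivation_ext fun i => (Submodule.Quotient.mk_eq_zero J).2 (h i)
  exact (Submodule.Quotient.mk_eq_zero J).1 (congrArg (· f) hD)

lemma totalDegree_pderiv_lt [CommSemiring R] {i : σ} {f : MvPolynomial σ R}
    (h : pderiv i f ≠ 0) : (pderiv i f).totalDegree < f.totalDegree := by
  have hlt : ∀ m ∈ (pderiv i f).support, (m.sum fun _ e => e) < f.totalDegree := by
    intro m hm
    have hm' : m + Finsupp.single i 1 ∈ f.support := by
      rw [mem_support_iff, coeff_pderiv] at hm
      exact mem_support_iff.2 (left_ne_zero_of_mul hm)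
    have := le_totalDegree hm'
    rw [Finsupp.sum_add_index' (fun _ => rfl) (fun _ _ _ => rfl),
      Finsupp.sum_single_index rfl] at this
    omega
  obtain ⟨m, hm⟩ := support_nonempty.2 h
  exact (Finset.sup_lt_iff (lt_of_le_of_lt bot_le (hlt m hm))).2 hlt

lemma eq_C_of_forall_pderiv_eq_zero [CommRing R] [IsDomain R] [CharZero R]
    {f : MvPolynomial σ R} (h : ∀ i, pderiv i f = 0) : f = C (coeff 0 f) := by
  classical
  ext m
  rcases eq_or_ne m 0 with rfl | hm
  · rw [coeff_C, if_pos rfl]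
  obtain ⟨i, hi⟩ : ∃ i, m i ≠ 0 := by
    by_contra! hc
    exact hm (Finsupp.ext hc)
  have hcoeff := coeff_pderiv (i := i) f (m - Finsupp.single i 1)
  have hle : Finsupp.single i 1 ≤ m := Finsupp.single_le_iff.2 (Nat.one_le_iff_ne_zero.2 hi)
  rw [h i, coeff_zero, tsub_add_cancel_of_le hle] at hcoeff
  rw [coeff_C, if_neg (Ne.symm hm)]
  exact (mul_eq_zero.1 hcoeff.symm).resolve_right (Nat.cast_add_one_ne_zero _)

lemma eq_zero_of_pderiv_stable [CommRing R] [IsDomain R] [CharZero R]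
    {S : Set (MvPolynomial σ R)} (x : σ → R) (hS : ∀ f ∈ S, ∀ i, pderiv i f ∈ S)
    (hx : ∀ f ∈ S, eval x f = 0) {f : MvPolynomial σ R} (hf : f ∈ S) : f = 0 := by
  induction hd : f.totalDegree using Nat.strong_induction_on generalizing f with
  | _ d ih =>
    have hconst : f = C (coeff 0 f) := eq_C_of_forall_pderiv_eq_zero fun i => by
      by_contra hi
      exact hi (ih _ (hd ▸ totalDegree_pderiv_lt hi) (hS f hf i) rfl)
    have h0 := hx f hf
    rw [hconst, eval_C] at h0
    rw [hconst, h0, C_0]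

lemma span_range_X_sub_C_eq_vanishingIdeal [Field R] (x : σ → R) :
    Ideal.span (Set.range fun i => X i - C (x i)) = vanishingIdeal R {x} := by
  apply le_antisymm
  · rw [Ideal.span_le]
    rintro _ ⟨i, rfl⟩
    simp
  · intro p hp
    rw [mem_vanishingIdeal_singleton_iff, aeval_eq_eval] at hp
    suffices ∀ q, q - C (eval x q) ∈ Ideal.span (Set.range fun i => X i - C (x i)) by
      simpa [hp] using this p
    intro p
    induction p using MvPolynomial.induction_on with
    | C a => simp
    | add p q hp hq =>
      simpa only [map_add, add_sub_add_comm] using add_mem hp hq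
    | mul_X p i hp =>
      have e : p * X i - C (eval x (p * X i))
          = (p - C (eval x p)) * X i + C (eval x p) * (X i - C (x i)) := by
        simp only [map_mul, eval_X]
        ring
      rw [e]
      exact add_mem (Ideal.mul_mem_right _ _ hp)
        (Ideal.mul_mem_left _ _ (Ideal.subset_span ⟨i, rfl⟩))

lemma span_X_sub_C_pair_eq_vanishingIdeal [Field R] (a b : R) :
    Ideal.span {X 0 - C a, X 1 - C b} = vanishingIdeal R {![a, b]} := by
  rw [← span_range_X_sub_C_eq_vanishingIdeal]
  congr 1
  ext
  simp [Fin.exists_fin_two, eq_comm]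

lemma isMaximal_span_X_sub_C_pair [Field R] (a b : R) :
    (Ideal.span {X 0 - C a, X 1 - C b} : Ideal (MvPolynomial (Fin 2) R)).IsMaximal :=
  span_X_sub_C_pair_eq_vanishingIdeal a b ▸ inferInstance

lemma exists_eq_span_X_sub_C_pair_of_isMaximal [Field R] [IsAlgClosed R]
    {m : Ideal (MvPolynomial (Fin 2) R)} (hm : m.IsMaximal) :
    ∃ a b : R, m = Ideal.span {X 0 - C a, X 1 - C b} := by
  obtain ⟨x, rfl⟩ := isMaximal_iff_eq_vanishingIdeal_singleton.1 hm
  refine ⟨x 0, x 1, ?_⟩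
  rw [span_X_sub_C_pair_eq_vanishingIdeal]
  congr
  ext i
  fin_cases i <;> rfl

end MvPolynomial

namespace PoissonBracket

variable {k R : Type*} [CommRing k] [CommRing R] [Algebra k R] (B : PoissonBracket k R)

def hamiltonian (a : R) : Derivation k R R :=
  Derivation.mk' ⟨⟨B.bracket a, B.add_right a⟩, fun t b => B.smul_right t a b⟩ fun b c => by
    simp only [LinearMap.coe_mk, AddHom.coe_mk, B.leibniz, smul_eq_mul]
    ring

@[simp]
lemma hamiltonian_apply (a b : R) : B.hamiltonian a b = B.bracket a b := rfl

lemma bracket_self [IsAddTorsionFree R] (a : R) : B.bracket a a = 0 :=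
  self_eq_neg.1 (B.antisymm a a)

end PoissonBracket

section PoissonCore

variable {k R : Type*} [CommRing k] [CommRing R] [Algebra k R] (B : PoissonBracket k R)

lemma poissonCore_le (J : Ideal R) : poissonCore B J ≤ J :=
  sSup_le fun _ hI => hI.2

lemma poissonCore_eq_self {J : Ideal R} (hJ : IsPoissonIdeal B J) : poissonCore B J = J :=
  le_antisymm (poissonCore_le B J) (le_sSup ⟨hJ, le_rfl⟩)

lemma poissonCore_eq_bot {J : Ideal R} (h : ∀ I, IsPoissonIdeal B I → I ≤ J → I = ⊥) :
    poissonCore B J = ⊥ :=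
  sSup_eq_bot.2 fun I hI => h I hI.1 hI.2

end PoissonCore

namespace PoissonBracket

variable {k : Type*} [Field k] [CharZero k] {B : PoissonBracket k (MvPolynomial (Fin 2) k)}

lemma bracket_X_zero_eq (hB : B.bracket (X 0) (X 1) = X 0 * X 1) (f : MvPolynomial (Fin 2) k) :
    B.bracket (X 0) f = X 0 * X 1 * pderiv 1 f := by
  have hD : B.hamiltonian (X 0) = (X 0 * X 1 : MvPolynomial (Fin 2) k) • pderiv 1 :=
    derivation_ext fun i => by fin_cases i <;> simp [hB, bracket_self]
  exact congrArg (· f) hD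

lemma bracket_X_one_eq (hB : B.bracket (X 0) (X 1) = X 0 * X 1) (f : MvPolynomial (Fin 2) k) :
    B.bracket (X 1) f = -(X 0 * X 1 * pderiv 0 f) := by
  have hD : B.hamiltonian (X 1) = -((X 0 * X 1 : MvPolynomial (Fin 2) k) • pderiv 0) :=
    derivation_ext fun i => by fin_cases i <;> simp [B.antisymm (X 1) (X 0), hB, bracket_self]
  exact congrArg (· f) hD

end PoissonBracket

section QuantumPlane

variable {k : Type*} [Field k] [CharZero k] {B : PoissonBracket k (MvPolynomial (Fin 2) k)}
  (hB : B.bracket (X 0) (X 1) = X 0 * X 1)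
include hB

lemma bracket_mem_span_X_zero_mul_X_one (a f : MvPolynomial (Fin 2) k) :
    B.bracket a f ∈ Ideal.span {X 0 * X 1} := by
  refine derivation_apply_mem_of_forall_X_mem (B.hamiltonian a)
    (Fin.forall_fin_two.2 ⟨?_, ?_⟩) f <;> rw [PoissonBracket.hamiltonian_apply, B.antisymm]
    <;> refine neg_mem (Ideal.mem_span_singleton'.2 ?_)
  · exact ⟨pderiv 1 a, by rw [B.bracket_X_zero_eq hB]; ring⟩
  · exact ⟨-pderiv 0 a, by rw [B.bracket_X_one_eq hB]; ring⟩

lemma isPoissonIdeal_of_X_zero_mul_X_one_mem {I : Ideal (MvPolynomial (Fin 2) k)}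
    (h : X 0 * X 1 ∈ I) : IsPoissonIdeal B I := fun a f _ =>
  (Ideal.span_singleton_le_iff_mem I).2 h (bracket_mem_span_X_zero_mul_X_one hB a f)

lemma X_zero_mul_X_one_mul_pderiv_mem {I : Ideal (MvPolynomial (Fin 2) k)}
    (hI : IsPoissonIdeal B I) (i : Fin 2) {f : MvPolynomial (Fin 2) k} (hf : f ∈ I) :
    X 0 * X 1 * pderiv i f ∈ I := by
  fin_cases i
  · simpa [B.bracket_X_one_eq hB] using neg_mem (hI (X 1) f hf)
  · simpa [B.bracket_X_zero_eq hB] using hI (X 0) f hf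

lemma pow_succ_mul_pderiv_mem {I : Ideal (MvPolynomial (Fin 2) k)} (hI : IsPoissonIdeal B I)
    (i : Fin 2) {n : ℕ} {f : MvPolynomial (Fin 2) k} (hf : (X 0 * X 1) ^ n * f ∈ I) :
    (X 0 * X 1) ^ (n + 1) * pderiv i f ∈ I := by
  rw [Derivation.pow_succ_mul_apply]
  exact sub_mem (X_zero_mul_X_one_mul_pderiv_mem hB hI i hf) (I.mul_mem_left _ hf)

lemma eq_bot_of_le_vanishingIdeal {x : Fin 2 → k} (hx : x 0 * x 1 ≠ 0)
    {I : Ideal (MvPolynomial (Fin 2) k)} (hI : IsPoissonIdeal B I)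
    (hle : I ≤ vanishingIdeal k {x}) : I = ⊥ := by
  let S : Set (MvPolynomial (Fin 2) k) := {f | ∃ n, (X 0 * X 1) ^ n * f ∈ I}
  have hS : ∀ f ∈ S, ∀ i, pderiv i f ∈ S := fun f ⟨n, hf⟩ i =>
    ⟨n + 1, pow_succ_mul_pderiv_mem hB hI i hf⟩
  have hev : ∀ f ∈ S, eval x f = 0 := fun f ⟨n, hf⟩ => by
    have h := (mem_vanishingIdeal_singleton_iff x _).1 (hle hf)
    simpa [hx] using h
  exact (Submodule.eq_bot_iff I).2 fun f hf =>
    eq_zero_of_pderiv_stable x hS hev ⟨0, by simpa using hf⟩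

lemma poissonCore_span_X_sub_C_pair_eq_bot {a b : k} (ha : a ≠ 0) (hb : b ≠ 0) :
    poissonCore B (Ideal.span {X 0 - C a, X 1 - C b}) = ⊥ := by
  refine poissonCore_eq_bot B fun I hI hle =>
    eq_bot_of_le_vanishingIdeal hB (x := ![a, b]) ?_ hI ?_
  · simpa using And.intro ha hb
  · rwa [← span_X_sub_C_pair_eq_vanishingIdeal]

lemma not_isPoissonPrimitive_span_X [IsAlgClosed k] (i : Fin 2) :
    ¬ IsPoissonPrimitive B (Ideal.span {(X i : MvPolynomial (Fin 2) k)}) := by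
  rintro ⟨m, hm, hcore⟩
  obtain ⟨x, rfl⟩ := isMaximal_iff_eq_vanishingIdeal_singleton.1 hm
  have hxi : x i = 0 := by
    have h := poissonCore_le B _ (hcore ▸ Ideal.mem_span_singleton_self (X i))
    simpa using (mem_vanishingIdeal_singleton_iff x _).1 h
  have hPoisson : IsPoissonIdeal B (vanishingIdeal k {x}) :=
    isPoissonIdeal_of_X_zero_mul_X_one_mem hB (by fin_cases i <;> simp_all)
  rw [poissonCore_eq_self B hPoisson] at hcore
  obtain ⟨j, hji⟩ : ∃ j, j ≠ i := ⟨i + 1, by fin_cases i <;> decide⟩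
  have hmem : X j - C (x j) ∈ Ideal.span {(X i : MvPolynomial (Fin 2) k)} :=
    hcore ▸ (mem_vanishingIdeal_singleton_iff x _).2 (by simp)
  obtain ⟨c, hc⟩ := Ideal.mem_span_singleton'.1 hmem
  have := congrArg (eval (Function.update x j (x j + 1))) hc
  simp [hji.symm, hxi] at this

end QuantumPlane

open MvPolynomial in
/-- the classification of Poisson-primitive ideals of `k[x,y]` with
`{x,y} = xy`, for `k` algebraically closed of characteristic zero. -/
theorem poisson_primitives_of_quantum_plane_limit (k : Type*) [Field k] [CharZero k]
    [IsAlgClosed k] (B : PoissonBracket k (MvPolynomial (Fin 2) k))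
    (hB : B.bracket (X 0) (X 1) = X 0 * X 1) :
    (∀ Q : Ideal (MvPolynomial (Fin 2) k),
      IsPoissonPrimitive B Q ↔
        ((∃ α : k, Q = Ideal.span {X 0 - C α, X 1}) ∨
         (∃ β : k, Q = Ideal.span {X 0, X 1 - C β}) ∨
         Q = ⊥)) ∧
    (∀ α β : k, α ≠ 0 → β ≠ 0 →
      poissonCore B (Ideal.span {X 0 - C α, X 1 - C β}) = ⊥) ∧
    ¬ IsPoissonPrimitive B (Ideal.span {(X 0 : MvPolynomial (Fin 2) k)}) ∧
    ¬ IsPoissonPrimitive B (Ideal.span {(X 1 : MvPolynomial (Fin 2) k)}) := by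
  have hOnXAxis : ∀ α, IsPoissonIdeal B (Ideal.span {X 0 - C α, X 1}) := fun α =>
    isPoissonIdeal_of_X_zero_mul_X_one_mem hB <|
      Ideal.mul_mem_left _ _ (Ideal.subset_span (Set.mem_insert_of_mem _ rfl))
  have hOnYAxis : ∀ β, IsPoissonIdeal B (Ideal.span {X 0, X 1 - C β}) := fun β =>
    isPoissonIdeal_of_X_zero_mul_X_one_mem hB <|
      Ideal.mul_mem_right _ _ (Ideal.subset_span (Set.mem_insert _ _))
  refine ⟨fun Q => ⟨?_, ?_⟩, fun α β => poissonCore_span_X_sub_C_pair_eq_bot hB,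
    not_isPoissonPrimitive_span_X hB 0, not_isPoissonPrimitive_span_X hB 1⟩
  · rintro ⟨m, hm, rfl⟩
    obtain ⟨a, b, rfl⟩ := exists_eq_span_X_sub_C_pair_of_isMaximal hm
    by_cases hb : b = 0
    · subst hb
      exact Or.inl ⟨a, by simpa using poissonCore_eq_self B (hOnXAxis a)⟩
    by_cases ha : a = 0
    · subst ha
      exact Or.inr (Or.inl ⟨b, by simpa using poissonCore_eq_self B (hOnYAxis b)⟩)
    exact Or.inr (Or.inr (poissonCore_span_X_sub_C_pair_eq_bot hB ha hb))
  · rintro (⟨α, rfl⟩ | ⟨β, rfl⟩ | rfl)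
    · exact ⟨_, by simpa using isMaximal_span_X_sub_C_pair α 0,
        poissonCore_eq_self B (hOnXAxis α)⟩
    · exact ⟨_, by simpa using isMaximal_span_X_sub_C_pair 0 β,
        poissonCore_eq_self B (hOnYAxis β)⟩
    · exact ⟨_, isMaximal_span_X_sub_C_pair 1 1,
        poissonCore_span_X_sub_C_pair_eq_bot hB one_ne_zero one_ne_zero⟩
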